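/- For all m, d ≥ 2, the operator (1_d^m − d Φ_d^m) ⊗ (1_d^m + d^m Φ_d^m) is not block positive with respect to the m parties: there exists a separable state σ (the product of m two-qudit maximally entangled states shared within each party) with Tr[σ ((1 − dΦ) ⊗ (1 + d^m Φ))] = 2 − d − d^{1−m} < 0. -/

import Mathlib

/-! Both `Φ_d^m` and `Φ_d^2` are `d⁻¹ |u⟩⟨u|` with `u` the indicator of the diagonal basis
vectors, `⟨u, u⟩ = d`; so `Φ_d^m` is a symmetric idempotent of trace one and `σ = ⊗_k Φ_d^2`
is a product of states. Pairing `A ⊗ B` with `σ` gives `d^{-m} Tr(A Bᵀ)`, and for a symmetric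
trace-one projection `P`, `Tr((1 - dP)(1 + d^m P)) = d^m + d^m - d - d^{m+1}`, whence the
value `2 - d - d^{1-m}`. -/

open Matrix BigOperators ComplexOrder

noncomputable section

/-- Tensor product of a family of local operators, one per party/step. -/
def tensorFam {m : ℕ} {ι : Fin m → Type*} [∀ k, Fintype (ι k)]
    (A : (k : Fin m) → Matrix (ι k) (ι k) ℂ) :
    Matrix ((k : Fin m) → ι k) ((k : Fin m) → ι k) ℂ :=
  Matrix.of fun i j => ∏ k, A k (i k) (j k)

/-- Separable operator: a sum of tensor products of positive semidefinite local operators. -/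
def IsSep {m : ℕ} {ι : Fin m → Type*} [∀ k, Fintype (ι k)]
    (E : Matrix ((k : Fin m) → ι k) ((k : Fin m) → ι k) ℂ) : Prop :=
  ∃ (S : Finset ℕ) (A : ℕ → (k : Fin m) → Matrix (ι k) (ι k) ℂ),
    (∀ s ∈ S, ∀ k, (A s k).PosSemidef) ∧ E = ∑ s ∈ S, tensorFam (A s)

/-- Separable state: separable with trace one. -/
def IsSepState {m : ℕ} {ι : Fin m → Type*} [∀ k, Fintype (ι k)]
    (σ : Matrix ((k : Fin m) → ι k) ((k : Fin m) → ι k) ℂ) : Prop :=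
  IsSep σ ∧ σ.trace = 1

/-- Block positive: nonnegative mean value on every separable state. -/
def IsBlockPos {m : ℕ} {ι : Fin m → Type*} [∀ k, Fintype (ι k)]
    (E : Matrix ((k : Fin m) → ι k) ((k : Fin m) → ι k) ℂ) : Prop :=
  ∀ σ, IsSepState σ → 0 ≤ ((E * σ).trace).re

def IsPOVM {α N : Type*} [Fintype α] [Fintype N] [DecidableEq N]
    (M : α → Matrix N N ℂ) : Prop :=
  (∀ i, (M i).PosSemidef) ∧ ∑ i, M i = 1

/-- Average success probability of a guessing strategy. -/
def succProb {α N : Type*} [Fintype α] [Fintype N]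
    (η : α → ℝ) (ρ M : α → Matrix N N ℂ) : ℝ :=
  ∑ i, η i * ((ρ i * M i).trace).re
/-- The m-qudit GHZ state Φ_d^m = (1/d) Σ_{a,b} |a⋯a⟩⟨b⋯b|. -/
def ghz (m d : ℕ) : Matrix ((_ : Fin m) → Fin d) ((_ : Fin m) → Fin d) ℂ :=
  Matrix.of fun i j =>
    if (∀ k k', i k = i k') ∧ (∀ k k', j k = j k') then (d : ℂ)⁻¹ else 0

/-- Tensor product A ⊗ B of operators on two m-party spaces, with indices grouped so
that party k holds its factors from both spaces. -/
def pairTensor {m : ℕ} {ι ι' : Fin m → Type*} [∀ k, Fintype (ι k)] [∀ k, Fintype (ι' k)]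
    (A : Matrix ((k : Fin m) → ι k) ((k : Fin m) → ι k) ℂ)
    (B : Matrix ((k : Fin m) → ι' k) ((k : Fin m) → ι' k) ℂ) :
    Matrix ((k : Fin m) → ι k × ι' k) ((k : Fin m) → ι k × ι' k) ℂ :=
  Matrix.of fun i j =>
    A (fun k => (i k).1) (fun k => (j k).1) * B (fun k => (i k).2) (fun k => (j k).2)

/-- The two-qudit maximally entangled state Φ_d^2 held by a single party. -/
def phi2 (d : ℕ) : Matrix (Fin d × Fin d) (Fin d × Fin d) ℂ :=
  Matrix.of fun p q => if p.1 = p.2 ∧ q.1 = q.2 then (d : ℂ)⁻¹ else 0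

open Finset

theorem card_filter_forall_apply_eq {ι α : Type*} [Fintype ι] [DecidableEq ι] [Nonempty ι]
    [Fintype α] [DecidablePred fun f : ι → α => ∀ i j, f i = f j] :
    #{f : ι → α | ∀ i j, f i = f j} = Fintype.card α := by
  have hconst : ({f : ι → α | ∀ i j, f i = f j} : Finset (ι → α))
      = univ.map ⟨Function.const ι, Function.const_injective⟩ := by
    ext f
    simp only [mem_filter, mem_univ, true_and, mem_map, Function.Embedding.coeFn_mk]
    constructor
    · intro hf
      obtain ⟨i⟩ := ‹Nonempty ι›
      exact ⟨f i, funext fun j => hf i j⟩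
    · rintro ⟨a, rfl⟩ i j
      rfl
  rw [hconst, card_map, card_univ]

theorem sum_ite_forall_fst_eq_snd {ι α M : Type*} [Fintype ι] [DecidableEq ι] [Fintype α]
    [DecidablePred fun i : ι → α × α => ∀ k, (i k).1 = (i k).2] [AddCommMonoid M]
    (f : (ι → α × α) → M) :
    ∑ i : ι → α × α, (if ∀ k, (i k).1 = (i k).2 then f i else 0)
      = ∑ a : ι → α, f fun k => (a k, a k) := by
  have hdiag : ({i : ι → α × α | ∀ k, (i k).1 = (i k).2} : Finset _)
      = univ.map ⟨fun a k => (a k, a k),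
          fun a b h => funext fun k => congrArg Prod.fst (congrFun h k)⟩ := by
    ext i
    simp only [mem_filter, mem_univ, true_and, mem_map]
    constructor
    · intro hi
      exact ⟨fun k => (i k).1, funext fun k => Prod.ext rfl (hi k)⟩
    · rintro ⟨a, rfl⟩ k
      rfl
  rw [← sum_filter, hdiag, sum_map]
  rfl

def ghzVec (m d : ℕ) : (Fin m → Fin d) → ℂ := fun a => if ∀ k k', a k = a k' then 1 else 0

theorem ghz_eq_smul_vecMulVec (m d : ℕ) :
    ghz m d = (d : ℂ)⁻¹ • vecMulVec (ghzVec m d) (ghzVec m d) := by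
  ext a b
  simp only [ghz, ghzVec, of_apply, Matrix.smul_apply, vecMulVec_apply, smul_eq_mul, mul_ite,
    mul_one, mul_zero, ite_and]
  split_ifs <;> rfl

theorem ghzVec_dotProduct_self {m : ℕ} (hm : 0 < m) (d : ℕ) :
    ghzVec m d ⬝ᵥ ghzVec m d = d := by
  have : Nonempty (Fin m) := ⟨⟨0, hm⟩⟩
  simp only [dotProduct, ghzVec, mul_ite, mul_one, mul_zero, ← ite_and, and_self, sum_boole]
  rw [card_filter_forall_apply_eq, Fintype.card_fin]

theorem ghz_transpose (m d : ℕ) : (ghz m d)ᵀ = ghz m d := by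
  rw [ghz_eq_smul_vecMulVec, transpose_smul, transpose_vecMulVec]

theorem isIdempotentElem_ghz {m : ℕ} (hm : 0 < m) (d : ℕ) :
    IsIdempotentElem (ghz m d) := by
  have hscalar : (d : ℂ)⁻¹ * (d : ℂ)⁻¹ * d = (d : ℂ)⁻¹ := by
    rcases eq_or_ne (d : ℂ) 0 with hd | hd
    · simp [hd]
    · field_simp
  rw [IsIdempotentElem, ghz_eq_smul_vecMulVec, smul_mul_smul, vecMulVec_mul_vecMulVec,
    ghzVec_dotProduct_self hm, vecMulVec_smul, smul_smul, hscalar]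

theorem trace_ghz {m d : ℕ} (hm : 0 < m) (hd : d ≠ 0) : (ghz m d).trace = 1 := by
  rw [ghz_eq_smul_vecMulVec, trace_smul, trace_vecMulVec, ghzVec_dotProduct_self hm,
    smul_eq_mul, inv_mul_cancel₀ (Nat.cast_ne_zero.mpr hd)]

theorem IsIdempotentElem.trace_one_sub_smul_mul_one_add_smul {n R : Type*} [Fintype n]
    [DecidableEq n] [CommRing R] {P : Matrix n n R} (hP : IsIdempotentElem P) (a b : R) :
    ((1 - a • P) * (1 + b • P)).trace = Fintype.card n + (b - a - a * b) * P.trace := by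
  have hexpand : (1 - a • P) * (1 + b • P) = 1 + (b - a - a * b) • P := by
    simp only [sub_mul, mul_add, one_mul, mul_one, smul_mul_smul, hP.eq]
    module
  rw [hexpand, trace_add, trace_one, trace_smul, smul_eq_mul]

def phi2Vec (d : ℕ) : Fin d × Fin d → ℂ := fun p => if p.1 = p.2 then 1 else 0

theorem phi2_eq_smul_vecMulVec (d : ℕ) :
    phi2 d = (d : ℂ)⁻¹ • vecMulVec (phi2Vec d) (phi2Vec d) := by
  ext p q
  simp only [phi2, phi2Vec, of_apply, Matrix.smul_apply, vecMulVec_apply, smul_eq_mul, mul_ite,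
    mul_one, mul_zero, ite_and]
  split_ifs <;> rfl

theorem phi2Vec_dotProduct_self (d : ℕ) : phi2Vec d ⬝ᵥ phi2Vec d = d := by
  simp only [dotProduct, phi2Vec, mul_ite, mul_one, mul_zero, ← ite_and, and_self,
    Fintype.sum_prod_type, sum_ite_eq, mem_univ, if_true, sum_const, card_univ, Fintype.card_fin,
    nsmul_eq_mul, mul_one]

theorem star_phi2Vec (d : ℕ) : star (phi2Vec d) = phi2Vec d := by
  ext p
  simp only [phi2Vec, Pi.star_apply, apply_ite star, star_one, star_zero]

theorem phi2_posSemidef (d : ℕ) : (phi2 d).PosSemidef := by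
  rw [phi2_eq_smul_vecMulVec]
  refine PosSemidef.smul ?_ (inv_nonneg.mpr (Nat.cast_nonneg' d))
  simpa only [star_phi2Vec] using posSemidef_vecMulVec_self_star (phi2Vec d)

theorem trace_phi2 {d : ℕ} (hd : d ≠ 0) : (phi2 d).trace = 1 := by
  rw [phi2_eq_smul_vecMulVec, trace_smul, trace_vecMulVec, phi2Vec_dotProduct_self,
    smul_eq_mul, inv_mul_cancel₀ (Nat.cast_ne_zero.mpr hd)]

theorem trace_tensorFam {m : ℕ} {ι : Fin m → Type*} [∀ k, Fintype (ι k)]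
    (A : (k : Fin m) → Matrix (ι k) (ι k) ℂ) : (tensorFam A).trace = ∏ k, (A k).trace := by
  simp only [trace, Matrix.diag, tensorFam, of_apply]
  exact (Fintype.prod_sum fun k j => A k j j).symm

theorem isSepState_tensorFam {m : ℕ} {ι : Fin m → Type*} [∀ k, Fintype (ι k)]
    {A : (k : Fin m) → Matrix (ι k) (ι k) ℂ} (hpos : ∀ k, (A k).PosSemidef)
    (htrace : ∀ k, (A k).trace = 1) : IsSepState (tensorFam A) := by
  refine ⟨⟨{0}, fun _ => A, fun _ _ => hpos, (sum_singleton _ _).symm⟩, ?_⟩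
  simp only [trace_tensorFam, htrace, prod_const_one]

theorem tensorFam_phi2_apply {m d : ℕ} (i j : Fin m → Fin d × Fin d) :
    tensorFam (fun _ => phi2 d) i j
      = if (∀ k, (i k).1 = (i k).2) ∧ ∀ k, (j k).1 = (j k).2 then ((d : ℂ)⁻¹) ^ m else 0 := by
  simp only [tensorFam, phi2, of_apply, Fintype.prod_ite_zero, prod_const, card_univ,
    Fintype.card_fin, forall_and]

theorem trace_pairTensor_mul_tensorFam_phi2 {m d : ℕ}
    (A B : Matrix (Fin m → Fin d) (Fin m → Fin d) ℂ) :
    (pairTensor A B * tensorFam (fun _ => phi2 d)).trace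
      = ((d : ℂ)⁻¹) ^ m * (A * Bᵀ).trace := by
  simp only [trace, Matrix.diag, mul_apply, tensorFam_phi2_apply, transpose_apply, ite_and,
    mul_ite, mul_zero, sum_ite_irrel, sum_const_zero, sum_ite_forall_fst_eq_snd, mul_sum]
  simp only [pairTensor, of_apply]
  exact sum_congr rfl fun a _ => sum_congr rfl fun b _ => mul_comm _ _

theorem trace_pairTensor_ghz_mul_tensorFam_phi2 {m d : ℕ} (hm : 0 < m) (hd : d ≠ 0) :
    (pairTensor (1 - (d : ℂ) • ghz m d) (1 + ((d : ℂ) ^ m) • ghz m d) *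
        tensorFam (fun _ => phi2 d)).trace
      = ((2 - (d : ℝ) - ((d : ℝ) ^ (m - 1))⁻¹ : ℝ) : ℂ) := by
  rw [trace_pairTensor_mul_tensorFam_phi2, transpose_add, transpose_one, transpose_smul,
    ghz_transpose, (isIdempotentElem_ghz hm d).trace_one_sub_smul_mul_one_add_smul,
    trace_ghz hm hd, Fintype.card_fun, Fintype.card_fin, Fintype.card_fin]
  obtain ⟨n, rfl⟩ := Nat.exists_eq_add_one_of_ne_zero hm.ne'
  have hdC : (d : ℂ) ≠ 0 := Nat.cast_ne_zero.mpr hd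
  push_cast
  rw [inv_pow]
  field_simp
  ring

/-- (1 − dΦ_d^m) ⊗ (1 + d^m Φ_d^m) is not block positive with respect to
the m parties: the product of m two-qudit maximally entangled states (shared within each
party) is a separable state on which its mean value is 2 − d − d^{1−m} < 0. -/
theorem ghz_pair_not_blockPos (m d : ℕ) (hm : 2 ≤ m) (hd : 2 ≤ d) :
    ¬ IsBlockPos (ι := fun k : Fin m => Fin d × Fin d)
        (pairTensor (1 - (d : ℂ) • ghz m d) (1 + ((d : ℂ) ^ m) • ghz m d)) ∧
    IsSepState (ι := fun k : Fin m => Fin d × Fin d) (tensorFam (fun _ : Fin m => phi2 d)) ∧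
    ((pairTensor (1 - (d : ℂ) • ghz m d) (1 + ((d : ℂ) ^ m) • ghz m d) *
        tensorFam (fun _ : Fin m => phi2 d)).trace
      = ((2 - (d : ℝ) - ((d : ℝ) ^ (m - 1))⁻¹ : ℝ) : ℂ)) ∧
    (2 - (d : ℝ) - ((d : ℝ) ^ (m - 1))⁻¹ < 0) := by
  have hsep : IsSepState (tensorFam fun _ : Fin m => phi2 d) :=
    isSepState_tensorFam (fun _ => phi2_posSemidef d) (fun _ => trace_phi2 (by omega))
  have htrace := trace_pairTensor_ghz_mul_tensorFam_phi2 (show 0 < m by omega)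
    (show d ≠ 0 by omega)
  have hneg : 2 - (d : ℝ) - ((d : ℝ) ^ (m - 1))⁻¹ < 0 := by
    have hinv : 0 < ((d : ℝ) ^ (m - 1))⁻¹ := by positivity
    have hd' : (2 : ℝ) ≤ d := by exact_mod_cast hd
    linarith
  refine ⟨fun hpos => ?_, hsep, htrace, hneg⟩
  have := hpos _ hsep
  rw [htrace, Complex.ofReal_re] at this
  linarith
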